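/- arXiv:1703.00174 — 6 statements merged into one kernel-verified Lean document; each statement's English description precedes it below -/
import Mathlib

section
/- A subset A of a group G is small if and only if A is not prethick, i.e., for every finite F ⊆ G the set FA is not thick. -/
open Pointwise

def Large {G : Type*} [Group G] (A : Set G) : Prop :=
  ∃ F : Finset G, (F : Set G) * A = Set.univ

def SmallSet {G : Type*} [Group G] (A : Set G) : Prop :=
  ∀ L : Set G, Large L → Large (L \ A)

def Thick {G : Type*} [Group G] (A : Set G) : Prop :=
  ∀ F : Finset G, ∃ g : G, ∀ f ∈ F, f * g ∈ A

/-- `A` is *prethick* if `F * A` is thick for some finite `F`. -/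
def Prethick {G : Type*} [Group G] (A : Set G) : Prop :=
  ∃ F : Finset G, Thick ((F : Set G) * A)

private lemma large_iff {G : Type*} [Group G] {A : Set G} :
    Large A ↔ ∃ F : Finset G, ∀ g : G, ∃ f ∈ F, ∃ a ∈ A, g = f * a := by
  unfold Large
  constructor
  · rintro ⟨F, hF⟩
    refine ⟨F, fun g => ?_⟩
    have : g ∈ (F : Set G) * A := by rw [hF]; trivial
    rcases Set.mem_mul.1 this with ⟨f, hf, a, ha, h⟩
    exact ⟨f, hf, a, ha, h.symm⟩
  · rintro ⟨F, hF⟩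
    refine ⟨F, Set.eq_univ_iff_forall.2 fun g => ?_⟩
    rcases hF g with ⟨f, hf, a, ha, h⟩
    exact Set.mem_mul.2 ⟨f, hf, a, ha, h.symm⟩

private lemma large_smul {G : Type*} [Group G] {L : Set G} (g : G) (h : Large L) :
    Large (g • L) := by
  classical
  rcases large_iff.1 h with ⟨F, hF⟩
  refine large_iff.2 ⟨({g} : Finset G) * F * {g⁻¹}, fun x => ?_⟩
  rcases hF (g⁻¹ * x) with ⟨f, hf, l, hl, hx⟩
  refine ⟨g * f * g⁻¹, ?_, g * l, ⟨l, hl, rfl⟩, ?_⟩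
  · exact Finset.mul_mem_mul (Finset.mul_mem_mul (Finset.mem_singleton_self g) hf)
      (Finset.mem_singleton_self g⁻¹)
  · have : x = g * (g⁻¹ * x) := by group
    rw [this, hx]; group

private lemma small_diff_smul {G : Type*} [Group G] {A L : Set G} (hA : SmallSet A)
    (hL : Large L) (f : G) : Large (L \ f • A) := by
  have key : L \ f • A = f • ((f⁻¹ • L) \ A) := by
    ext x
    simp only [Set.mem_diff, Set.mem_smul_set_iff_inv_smul_mem, smul_eq_mul, inv_inv]
    constructor
    · rintro ⟨hxL, hxA⟩
      exact ⟨by rwa [mul_inv_cancel_left], hxA⟩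
    · rintro ⟨hxL, hxA⟩
      exact ⟨by rwa [mul_inv_cancel_left] at hxL, hxA⟩
  rw [key]
  exact large_smul f (hA _ (large_smul f⁻¹ hL))

private lemma small_imp_compl_large {G : Type*} [Group G] {A : Set G} (hA : SmallSet A) :
    ∀ F : Finset G, Large ((F : Set G) * A)ᶜ := by
  classical
  intro F
  induction F using Finset.induction with
  | empty =>
    refine large_iff.2 ⟨{1}, fun g => ⟨1, Finset.mem_singleton_self 1, g, ?_, (one_mul g).symm⟩⟩
    simp
  | @insert a F ha IH =>
    have : ((↑(insert a F) : Set G) * A)ᶜ = ((F : Set G) * A)ᶜ \ (a • A) := by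
      ext x
      simp only [Finset.coe_insert, Set.mem_compl_iff, Set.mem_mul, Set.mem_insert_iff,
        Set.mem_diff, Set.mem_smul_set, smul_eq_mul]
      push_neg
      constructor
      · intro h
        exact ⟨fun f hf b hb => h f (Or.inr hf) b hb, fun b hb => h a (Or.inl rfl) b hb⟩
      · rintro ⟨h1, h2⟩ f hf b hb
        rcases hf with rfl | hf
        · exact h2 b hb
        · exact h1 f hf b hb
    rw [this]
    exact small_diff_smul hA IH a

private lemma not_thick_iff {G : Type*} [Group G] {B : Set G} :
    ¬ Thick B ↔ Large Bᶜ := by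
  classical
  constructor
  · intro h
    rw [Thick] at h
    push_neg at h
    rcases h with ⟨F, hF⟩
    refine large_iff.2 ⟨F⁻¹, fun g => ?_⟩
    rcases hF g with ⟨f, hf, hfg⟩
    exact ⟨f⁻¹, Finset.inv_mem_inv hf, f * g, hfg, by group⟩
  · intro h hT
    rcases large_iff.1 h with ⟨E, hE⟩
    rcases hT E⁻¹ with ⟨g, hg⟩
    rcases hE g with ⟨e, he, b, hb, hgb⟩
    have := hg e⁻¹ (Finset.inv_mem_inv he)
    rw [hgb, inv_mul_cancel_left] at this
    exact hb this

theorem smallSet_iff_not_prethick {G : Type*} [Group G] (A : Set G) :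
    SmallSet A ↔ ¬ Prethick A := by
  classical
  constructor
  · rintro hS ⟨F, hT⟩
    exact (not_thick_iff.2 (small_imp_compl_large hS F)) hT
  · intro hP L hL
    rcases large_iff.1 hL with ⟨F, hF⟩
    have hnt : ¬ Thick ((F : Set G) * A) := fun t => hP ⟨F, t⟩
    rcases large_iff.1 (not_thick_iff.1 hnt) with ⟨E, hE⟩
    refine large_iff.2 ⟨E * F, fun g => ?_⟩
    rcases hE g with ⟨e, he, y, hy, hgy⟩
    rcases hF y with ⟨f, hf, l, hl, hyl⟩
    have hlA : l ∉ A := fun h => hy (Set.mem_mul.2 ⟨f, hf, l, h, hyl.symm⟩)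
    exact ⟨e * f, Finset.mul_mem_mul he hf, l, ⟨hl, hlA⟩,
      by rw [hgy, hyl, mul_assoc]⟩
end

section
/- The family of small subsets of a group G is an ideal in the Boolean algebra of all subsets of G: it contains the empty set, is closed under taking subsets, and is closed under finite unions. -/
open Pointwise

theorem smallSet_ideal {G : Type*} [Group G] :
    SmallSet (∅ : Set G) ∧
    (∀ A B : Set G, SmallSet B → A ⊆ B → SmallSet A) ∧
    (∀ A B : Set G, SmallSet A → SmallSet B → SmallSet (A ∪ B)) := by
  have mono : ∀ A B : Set G, A ⊆ B → Large A → Large B := by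
    rintro A B hAB ⟨F, hF⟩
    exact ⟨F, Set.eq_univ_of_univ_subset (hF ▸ Set.mul_subset_mul_left hAB)⟩
  refine ⟨fun L hL => by simpa using hL, fun A B hB hAB L hL => ?_, ?_⟩
  · exact mono _ _ (Set.diff_subset_diff_right hAB) (hB L hL)
  · intro A B hA hB L hL
    have := hB _ (hA L hL)
    rwa [Set.diff_diff] at this
end

section
/- The family of sparse subsets of a group G is an ideal: it is closed under taking subsets and under finite unions. -/
open Pointwise

def Sparse {G : Type*} [Group G] (A : Set G) : Prop :=
  ∀ Y : Set G, Y.Infinite →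
    ∃ F : Finset G, F.Nonempty ∧ (F : Set G) ⊆ Y ∧ (⋂ g ∈ F, g • A).Finite

theorem sparse_ideal {G : Type*} [Group G] :
    (∀ A B : Set G, Sparse B → A ⊆ B → Sparse A) ∧
    (∀ A B : Set G, Sparse A → Sparse B → Sparse (A ∪ B)) := by
  constructor
  · intro A B hB hAB Y hY
    obtain ⟨F, hne, hsub, hfin⟩ := hB Y hY
    exact ⟨F, hne, hsub,
      hfin.subset (Set.iInter₂_mono fun g _ => Set.smul_set_mono hAB)⟩
  · intro A B hA hB Y hY
    by_contra hcon
    push_neg at hcon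
    haveI : Infinite G := by
      haveI := hY.to_subtype
      exact Infinite.of_injective (Subtype.val : Y → G) Subtype.val_injective
    -- every finite intersection of translates of A ∪ B over a finite subset of Y is infinite
    have key : ∀ I : Finset G, (I : Set G) ⊆ Y → (⋂ g ∈ I, g • (A ∪ B)).Infinite := by
      intro I hI
      rcases I.eq_empty_or_nonempty with rfl | hne
      · simpa using Set.infinite_univ
      · intro hfin
        exact hcon I hne hI hfin
    set L : Filter G := Filter.cofinite ⊓ ⨅ g ∈ Y, Filter.principal (g • (A ∪ B)) with hL
    have hLne : L.NeBot := by
      rw [← Filter.forall_mem_nonempty_iff_neBot]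
      intro s hs
      rw [hL, Filter.mem_inf_iff] at hs
      obtain ⟨t₁, ht₁, t₂, ht₂, rfl⟩ := hs
      rw [iInf_subtype'] at ht₂
      rw [Filter.mem_iInf] at ht₂
      obtain ⟨I, hIfin, V, hV, rfl⟩ := ht₂
      classical
      set Fs : Finset G := hIfin.toFinset.image (fun x => ((x : Y) : G)) with hFs
      have hFsY : (Fs : Set G) ⊆ Y := by
        intro g hg
        simp only [hFs, Finset.coe_image, Set.mem_image] at hg
        obtain ⟨x, _, rfl⟩ := hg
        exact ((x : Y)).2
      have hsubV : (⋂ g ∈ Fs, g • (A ∪ B)) ⊆ ⋂ i, V i := by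
        intro x hx
        refine Set.mem_iInter.2 fun i => ?_
        have hmem : ((i : Y) : G) ∈ Fs := by
          simp only [hFs, Finset.mem_image]
          exact ⟨i, hIfin.mem_toFinset.2 i.2, rfl⟩
        have := Set.mem_iInter₂.1 hx _ hmem
        exact Filter.mem_principal.1 (hV i) this
      have hinf : (⋂ g ∈ Fs, g • (A ∪ B)).Infinite := key Fs hFsY
      have ht₁c : t₁ᶜ.Finite := ht₁
      have : ((⋂ g ∈ Fs, g • (A ∪ B)) \ t₁ᶜ).Infinite := hinf.diff ht₁c
      obtain ⟨x, hx⟩ := this.nonempty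
      exact ⟨x, by simpa using hx.2, hsubV hx.1⟩
    obtain ⟨U, hU⟩ := Filter.exists_ultrafilter_le L
    have hcof : (U : Filter G) ≤ Filter.cofinite := hU.trans inf_le_left
    have hUinf : ∀ S ∈ U, ¬ S.Finite := by
      intro S hS hfin
      have h1 : Sᶜ ∈ U := hcof hfin.compl_mem_cofinite
      exact (Ultrafilter.compl_notMem_iff.2 hS) h1
    have hmem : ∀ g ∈ Y, g • (A ∪ B) ∈ U := by
      intro g hg
      exact hU (Filter.mem_inf_of_right
        (Filter.mem_iInf_of_mem g (Filter.mem_iInf_of_mem hg (Filter.mem_principal_self _))))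
    have hsplit : Y ⊆ {g ∈ Y | g • A ∈ U} ∪ {g ∈ Y | g • B ∈ U} := by
      intro g hg
      have := hmem g hg
      rw [Set.smul_set_union, Ultrafilter.union_mem_iff] at this
      rcases this with h | h
      · exact Or.inl ⟨hg, h⟩
      · exact Or.inr ⟨hg, h⟩
    rcases Set.infinite_union.1 (hY.mono hsplit) with hYA | hYB
    · obtain ⟨F, hne, hsub, hfin⟩ := hA _ hYA
      have : (⋂ g ∈ F, g • A) ∈ U :=
        (Filter.biInter_finset_mem F).2 fun g hg => (hsub hg).2
      exact hUinf _ this hfin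
    · obtain ⟨F, hne, hsub, hfin⟩ := hB _ hYB
      have : (⋂ g ∈ F, g • B) ∈ U :=
        (Filter.biInter_finset_mem F).2 fun g hg => (hsub hg).2
      exact hUinf _ this hfin
end

section
/- For a countable group G, the set of prethick subsets of G is a G_δσ subset (a countable union of G_δ sets) of P(G) ≅ {0,1}^G with the product topology. -/
open Pointwise

/-- The subset of `G` coded by a point of the Cantor cube `{0,1}^G`. -/
def toSet {G : Type*} (f : G → Bool) : Set G := {g : G | f g = true}

def IsFsigma {X : Type*} [TopologicalSpace X] (s : Set X) : Prop :=
  ∃ T : Set (Set X), T.Countable ∧ (∀ t ∈ T, IsClosed t) ∧ s = ⋃₀ T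

def IsFsigmaDelta {X : Type*} [TopologicalSpace X] (s : Set X) : Prop :=
  ∃ T : Set (Set X), T.Countable ∧ (∀ t ∈ T, IsFsigma t) ∧ s = ⋂₀ T

def IsGdeltaSigma {X : Type*} [TopologicalSpace X] (s : Set X) : Prop :=
  ∃ T : Set (Set X), T.Countable ∧ (∀ t ∈ T, IsGδ t) ∧ s = ⋃₀ T

theorem isGdeltaSigma_prethick {G : Type*} [Group G] [Countable G] :
    IsGdeltaSigma {f : G → Bool | Prethick (toSet f)} := by
  classical
  refine ⟨Set.range (fun F : Finset G => {f : G → Bool | Thick ((F : Set G) * toSet f)}),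
    Set.countable_range _, ?_, ?_⟩
  · rintro t ⟨F, rfl⟩
    have heq : {f : G → Bool | Thick ((F : Set G) * toSet f)} =
        ⋂ F' : Finset G, ⋃ g : G, ⋂ h ∈ F', ⋃ s ∈ F,
          {f : G → Bool | f (s⁻¹ * (h * g)) = true} := by
      ext f
      simp only [Set.mem_setOf_eq, Thick, Set.mem_iInter, Set.mem_iUnion, Set.mem_setOf_eq]
      constructor
      · intro H F'
        obtain ⟨g, hg⟩ := H F'
        refine ⟨g, fun h hh => ?_⟩
        obtain ⟨s, hs, a, ha, hsa⟩ := hg h hh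
        refine ⟨s, hs, ?_⟩
        have : s⁻¹ * (h * g) = a := by rw [← hsa]; group
        rw [this]; exact ha
      · intro H F'
        obtain ⟨g, hg⟩ := H F'
        refine ⟨g, fun h hh => ?_⟩
        obtain ⟨s, hs, hf⟩ := hg h hh
        exact ⟨s, hs, s⁻¹ * (h * g), hf, by group⟩
    show IsGδ {f : G → Bool | Thick ((F : Set G) * toSet f)}
    rw [heq]
    refine .iInter fun F' => IsOpen.isGδ ?_
    exact isOpen_iUnion fun g => isOpen_biInter_finset fun h _ =>
      isOpen_biUnion fun s _ => by
        have : {f : G → Bool | f (s⁻¹ * (h * g)) = true} =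
            (fun f : G → Bool => f (s⁻¹ * (h * g))) ⁻¹' {b : Bool | b = true} := rfl
        rw [this]
        exact IsOpen.preimage (continuous_apply _) (isOpen_discrete _)
  · ext f
    simp [Prethick, Set.sUnion_range]
end

section
/- For a countable group G, the set of small subsets of G is an F_σδ subset (a countable intersection of F_σ sets) of P(G) ≅ {0,1}^G with the product topology. -/
open Pointwise

namespace SmallAux

variable {G : Type*} [Group G]

lemma mem_finset_mul {F : Finset G} {A : Set G} {x : G} :
    x ∈ (F : Set G) * A ↔ ∃ h ∈ F, h⁻¹ * x ∈ A := by
  rw [Set.mem_mul]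
  constructor
  · rintro ⟨h, hh, a, ha, rfl⟩
    exact ⟨h, hh, by simpa using ha⟩
  · rintro ⟨h, hh, ha⟩
    exact ⟨h, hh, h⁻¹ * x, ha, by group⟩

lemma large_iff {A : Set G} :
    Large A ↔ ∃ F : Finset G, ∀ g : G, ∃ e ∈ F, e⁻¹ * g ∈ A := by
  constructor
  · rintro ⟨F, hF⟩
    exact ⟨F, fun g => mem_finset_mul.1 (hF ▸ Set.mem_univ g)⟩
  · rintro ⟨F, hF⟩
    exact ⟨F, Set.eq_univ_of_forall fun g => mem_finset_mul.2 (hF g)⟩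

lemma small_empty : SmallSet (∅ : Set G) := by
  intro L hL
  simpa using hL

lemma small_union {A B : Set G} (hA : SmallSet A) (hB : SmallSet B) :
    SmallSet (A ∪ B) := by
  intro L hL
  have h1 := hB _ (hA L hL)
  have : (L \ A) \ B = L \ (A ∪ B) := by
    ext x; simp [and_assoc]
  rwa [this] at h1

lemma large_smul {L : Set G} (g : G) (hL : Large L) : Large (g • L) := by
  classical
  rw [large_iff] at hL ⊢
  obtain ⟨F, hF⟩ := hL
  refine ⟨F.image (fun e => e * g⁻¹), fun x => ?_⟩
  obtain ⟨e, he, hex⟩ := hF x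
  refine ⟨e * g⁻¹, Finset.mem_image_of_mem _ he, ?_⟩
  rw [Set.mem_smul_set_iff_inv_smul_mem]
  simpa [mul_assoc] using hex

lemma small_smul {A : Set G} (g : G) (hA : SmallSet A) : SmallSet (g • A) := by
  classical
  intro L hL
  have h1 : Large (g⁻¹ • L) := large_smul g⁻¹ hL
  have h2 := hA _ h1
  rw [large_iff] at h2 ⊢
  obtain ⟨D, hD⟩ := h2
  refine ⟨D.image (fun d => g * d * g⁻¹), fun x => ?_⟩
  obtain ⟨d, hd, hdx⟩ := hD (g⁻¹ * x)
  obtain ⟨hdL, hdA⟩ := hdx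
  refine ⟨g * d * g⁻¹, Finset.mem_image_of_mem _ hd, ?_, ?_⟩
  · rw [Set.mem_smul_set_iff_inv_smul_mem] at hdL
    have : (g * d * g⁻¹)⁻¹ * x = g * (d⁻¹ * (g⁻¹ * x)) := by group
    rw [this]
    simpa [smul_eq_mul, mul_assoc] using hdL
  · intro hmem
    apply hdA
    rw [Set.mem_smul_set_iff_inv_smul_mem] at hmem
    have : g⁻¹ • ((g * d * g⁻¹)⁻¹ * x) = d⁻¹ * (g⁻¹ * x) := by
      simp [smul_eq_mul]; group
    rwa [this] at hmem

lemma small_finset_mul {A : Set G} (hA : SmallSet A) (F : Finset G) :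
    SmallSet ((F : Set G) * A) := by
  classical
  induction F using Finset.induction_on with
  | empty => simpa using small_empty
  | @insert a s hnotmem ih =>
    have : ((insert a s : Finset G) : Set G) * A = a • A ∪ (s : Set G) * A := by
      rw [Finset.coe_insert, Set.insert_eq, Set.union_mul, Set.singleton_mul]
      rfl
    rw [this]
    exact small_union (small_smul a hA) ih

lemma compl_large_of_small {A : Set G} (hA : SmallSet A) : Large Aᶜ := by
  have huniv : Large (Set.univ : Set G) := ⟨{1}, by simp⟩
  have := hA _ huniv
  simpa [Set.compl_eq_univ_diff] using this

lemma small_iff {A : Set G} :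
    SmallSet A ↔ ∀ F : Finset G, Large ((F : Set G) * A)ᶜ := by
  constructor
  · intro hA F
    exact compl_large_of_small (small_finset_mul hA F)
  · intro h L hL
    classical
    rw [large_iff] at hL
    obtain ⟨E, hE⟩ := hL
    have hD := (large_iff.1 (h E))
    obtain ⟨D, hD⟩ := hD
    rw [large_iff]
    refine ⟨D * E, fun g => ?_⟩
    obtain ⟨d, hd, hdg⟩ := hD g
    obtain ⟨e, he, hel⟩ := hE (d⁻¹ * g)
    refine ⟨d * e, Finset.mul_mem_mul hd he, ?_, ?_⟩
    · have : (d * e)⁻¹ * g = e⁻¹ * (d⁻¹ * g) := by group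
      rw [this]; exact hel
    · intro hmem
      apply hdg
      rw [mem_finset_mul]
      refine ⟨e, he, ?_⟩
      have : e⁻¹ * (d⁻¹ * g) = (d * e)⁻¹ * g := by group
      rw [this]
      exact hmem

/-- The closed piece: `E * ((F * toSet f)ᶜ) = univ` expressed coordinatewise. -/
def C (F E : Finset G) : Set (G → Bool) :=
  {f | ∀ g : G, ∃ e ∈ E, ∀ h ∈ F, f (h⁻¹ * (e⁻¹ * g)) = false}

lemma isClosed_C (F E : Finset G) : IsClosed (C F E) := by
  have hEq : C F E = ⋂ g : G, ⋃ e ∈ E, ⋂ h ∈ F,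
      {f : G → Bool | f (h⁻¹ * (e⁻¹ * g)) = false} := by
    ext f; simp [C]
  rw [hEq]
  refine isClosed_iInter fun g => ?_
  refine Set.Finite.isClosed_biUnion E.finite_toSet fun e _ => ?_
  refine isClosed_biInter fun h _ => ?_
  exact isClosed_eq (continuous_apply _) continuous_const

lemma mem_C_iff {F E : Finset G} {f : G → Bool} :
    f ∈ C F E ↔ ∀ g : G, ∃ e ∈ E, e⁻¹ * g ∈ ((F : Set G) * toSet f)ᶜ := by
  unfold C
  simp only [Set.mem_setOf_eq, Set.mem_compl_iff, mem_finset_mul]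
  constructor
  · intro hf g
    obtain ⟨e, he, hfe⟩ := hf g
    refine ⟨e, he, ?_⟩
    rintro ⟨h, hh, hmem⟩
    have h1 := hfe h hh
    have h2 : f (h⁻¹ * (e⁻¹ * g)) = true := hmem
    rw [h1] at h2
    exact Bool.false_ne_true h2
  · intro hf g
    obtain ⟨e, he, hfe⟩ := hf g
    refine ⟨e, he, fun h hh => ?_⟩
    by_contra hcon
    simp only [Bool.not_eq_false] at hcon
    exact hfe ⟨h, hh, hcon⟩

lemma mem_iUnion_C_iff {F : Finset G} {f : G → Bool} :
    (∃ E : Finset G, f ∈ C F E) ↔ Large ((F : Set G) * toSet f)ᶜ := by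
  rw [large_iff]
  exact exists_congr fun E => mem_C_iff

end SmallAux

theorem isFsigmaDelta_small {G : Type*} [Group G] [Countable G] :
    IsFsigmaDelta {f : G → Bool | SmallSet (toSet f)} := by
  classical
  refine ⟨Set.range (fun F : Finset G => ⋃ E : Finset G, SmallAux.C F E),
    Set.countable_range _, ?_, ?_⟩
  · rintro t ⟨F, rfl⟩
    refine ⟨Set.range (SmallAux.C F), Set.countable_range _, ?_, ?_⟩
    · rintro s ⟨E, rfl⟩
      exact SmallAux.isClosed_C F E
    · rw [Set.sUnion_range]
  · ext f
    rw [Set.mem_setOf_eq, Set.sInter_range, SmallAux.small_iff]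
    simp only [Set.mem_iInter, Set.mem_iUnion]
    exact forall_congr' fun F => SmallAux.mem_iUnion_C_iff.symm
end

section
/- For a countable group G, the set of weakly P-small subsets of G is an F_σδ subset of P(G) ≅ {0,1}^G with the product topology. -/
open Pointwise

def WeaklyPSmall {G : Type*} [Group G] (A : Set G) : Prop :=
  ∀ n : ℕ, ∃ g : Fin (n + 1) → G,
    ∀ i j : Fin (n + 1), i ≠ j → Disjoint (g i • A) (g j • A)

lemma mem_smul_toSet {G : Type*} [Group G] (f : G → Bool) (h x : G) :
    x ∈ h • toSet f ↔ f (h⁻¹ * x) = true := by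
  rw [Set.mem_smul_set_iff_inv_smul_mem]; rfl

lemma isClosed_block {G : Type*} [Group G] {n : ℕ} (g : Fin (n + 1) → G) :
    IsClosed {f : G → Bool | ∀ i j : Fin (n + 1), i ≠ j →
      Disjoint (g i • toSet f) (g j • toSet f)} := by
  have hset : {f : G → Bool | ∀ i j : Fin (n + 1), i ≠ j →
      Disjoint (g i • toSet f) (g j • toSet f)}
      = ⋂ (i : Fin (n + 1)) (j : Fin (n + 1)) (x : G),
        {f : G → Bool | i ≠ j →
          ¬(f ((g i)⁻¹ * x) = true ∧ f ((g j)⁻¹ * x) = true)} := by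
    ext f
    simp only [Set.mem_setOf_eq, Set.mem_iInter]
    constructor
    · intro h i j x hij hc
      exact Set.disjoint_left.mp (h i j hij)
        ((mem_smul_toSet f _ x).mpr hc.1) ((mem_smul_toSet f _ x).mpr hc.2)
    · intro h i j hij
      rw [Set.disjoint_left]
      intro x hx1 hx2
      exact h i j x hij ⟨(mem_smul_toSet f _ x).mp hx1, (mem_smul_toSet f _ x).mp hx2⟩
  rw [hset]
  refine isClosed_iInter fun i => isClosed_iInter fun j => isClosed_iInter fun x => ?_
  by_cases hij : i = j
  · have : {f : G → Bool | i ≠ j →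
        ¬(f ((g i)⁻¹ * x) = true ∧ f ((g j)⁻¹ * x) = true)} = Set.univ := by
      ext f; simp [hij]
    rw [this]; exact isClosed_univ
  · have : {f : G → Bool | i ≠ j →
        ¬(f ((g i)⁻¹ * x) = true ∧ f ((g j)⁻¹ * x) = true)}
        = {f : G → Bool | ¬(f ((g i)⁻¹ * x) = true ∧ f ((g j)⁻¹ * x) = true)} := by
      ext f; simp [hij]
    rw [this]
    have : IsOpen {f : G → Bool | f ((g i)⁻¹ * x) = true ∧ f ((g j)⁻¹ * x) = true} := by
      have h1 : IsOpen {f : G → Bool | f ((g i)⁻¹ * x) = true} := by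
        have : {f : G → Bool | f ((g i)⁻¹ * x) = true}
            = (fun f : G → Bool => f ((g i)⁻¹ * x)) ⁻¹' {true} := rfl
        rw [this]
        exact (isOpen_discrete _).preimage (continuous_apply _)
      have h2 : IsOpen {f : G → Bool | f ((g j)⁻¹ * x) = true} := by
        have : {f : G → Bool | f ((g j)⁻¹ * x) = true}
            = (fun f : G → Bool => f ((g j)⁻¹ * x)) ⁻¹' {true} := rfl
        rw [this]
        exact (isOpen_discrete _).preimage (continuous_apply _)
      exact h1.inter h2
    exact isClosed_compl_iff.mpr this

theorem isFsigmaDelta_weaklyPSmall {G : Type*} [Group G] [Countable G] :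
    IsFsigmaDelta {f : G → Bool | WeaklyPSmall (toSet f)} := by
  refine ⟨Set.range (fun n : ℕ => ⋃ g : Fin (n + 1) → G,
      {f : G → Bool | ∀ i j : Fin (n + 1), i ≠ j →
        Disjoint (g i • toSet f) (g j • toSet f)}),
    Set.countable_range _, ?_, ?_⟩
  · rintro t ⟨n, rfl⟩
    refine ⟨Set.range (fun g : Fin (n + 1) → G =>
      {f : G → Bool | ∀ i j : Fin (n + 1), i ≠ j →
        Disjoint (g i • toSet f) (g j • toSet f)}),
      Set.countable_range _, ?_, ?_⟩
    · rintro s ⟨g, rfl⟩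
      exact isClosed_block g
    · rw [Set.sUnion_range]
  · rw [Set.sInter_range]
    ext f
    simp only [Set.mem_setOf_eq, Set.mem_iInter, Set.mem_iUnion, WeaklyPSmall]
end
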